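/- Let (H_k) be a sequence of Hermitian adjacency matrices of mixed graphs, H_k : Matrix (Fin n_k) (Fin n_k) ℂ with n_k ≥ 1, such that each underlying simple graph G(H_k) is connected, ρ(H_i) ≠ ρ(H_j) whenever i ≠ j, and ρ(H_k) converges to some real number γ. Then the diameters of the graphs G(H_k) tend to infinity: for every natural number D there is N such that for all k ≥ N the diameter of G(H_k) exceeds D. -/

import Mathlib

open Polynomial Filter

/-- A matrix `H` is the Hermitian adjacency matrix of a mixed graph: zero diagonal,
entries in `{0, 1, i, -i}`, and Hermitian. -/
def IsMixedAdj {V : Type*} (H : Matrix V V ℂ) : Prop :=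
  (∀ v, H v v = 0) ∧
  (∀ u v, H u v = 0 ∨ H u v = 1 ∨ H u v = Complex.I ∨ H u v = -Complex.I) ∧
  (∀ u v, H u v = star (H v u))

/-- The spectral radius of a matrix: the maximum of `|λ|` over its eigenvalues. -/
noncomputable def specRad {V : Type*} [Fintype V] [DecidableEq V] (H : Matrix V V ℂ) : ℝ :=
  sSup ((fun z => ‖z‖) '' spectrum ℂ H)

/-- The largest (real) eigenvalue of a Hermitian matrix. -/
noncomputable def lam1 {V : Type*} [Fintype V] [DecidableEq V] (H : Matrix V V ℂ) : ℝ :=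
  sSup {x : ℝ | (x : ℂ) ∈ spectrum ℂ H}

/-- The underlying simple graph of a mixed graph: `u ∼ v` iff `H u v ≠ 0`. -/
def underGraph {V : Type*} (H : Matrix V V ℂ) : SimpleGraph V :=
  SimpleGraph.fromRel fun u v => H u v ≠ 0

/-- The diameter of a finite simple graph. -/
noncomputable def gdiam {V : Type*} [Fintype V] (G : SimpleGraph V) : ℕ :=
  Finset.univ.sup fun p : V × V => G.dist p.1 p.2

/-- Degree of a vertex in a mixed graph. -/
noncomputable def mdeg {V : Type*} (H : Matrix V V ℂ) (v : V) : ℕ :=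
  Nat.card {u // H v u ≠ 0}

/-- Maximum degree of a mixed graph. -/
noncomputable def maxDeg {V : Type*} [Fintype V] (H : Matrix V V ℂ) : ℕ :=
  Finset.univ.sup (mdeg H)

/-- Adjacency matrix (over ℂ) of the path graph on `m` vertices. -/
def pathAdj (m : ℕ) : Matrix (Fin m) (Fin m) ℂ :=
  Matrix.of fun i j => if (i : ℕ) + 1 = (j : ℕ) ∨ (j : ℕ) + 1 = (i : ℕ) then 1 else 0

/-- `p_m`: characteristic polynomial of the path on `m` vertices (`p_0 = 1`). -/
noncomputable def pPoly (m : ℕ) : Polynomial ℂ := (pathAdj m).charpoly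

/-- Build a Hermitian matrix on `Fin n` from a generator of "upper" entries. -/
noncomputable def mkHerm (n : ℕ) (g : ℕ → ℕ → ℂ) : Matrix (Fin n) (Fin n) ℂ :=
  Matrix.of fun i j => g (i : ℕ) (j : ℕ) + star (g (j : ℕ) (i : ℕ))

/-- `C'_{n-1,n}`: imaginary `(n-1)`-cycle on `0,…,n-2` with a pendant vertex `n-1` at `0`. -/
noncomputable def CpPend (n : ℕ) : Matrix (Fin n) (Fin n) ℂ :=
  mkHerm n fun a b =>
    if a + 1 = b ∧ b ≤ n - 2 then 1
    else if a = n - 2 ∧ b = 0 then Complex.I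
    else if a = 0 ∧ b = n - 1 then 1 else 0

/-- `C'_{3,n}`: imaginary triangle on `0,1,2` with an undirected path `0,3,4,…,n-1`. -/
noncomputable def Cp3 (n : ℕ) : Matrix (Fin n) (Fin n) ℂ :=
  mkHerm n fun a b =>
    if (a = 0 ∧ b = 1) ∨ (a = 1 ∧ b = 2) ∨ (a = 0 ∧ b = 3) then 1
    else if a = 2 ∧ b = 0 then Complex.I
    else if 3 ≤ a ∧ a + 1 = b then 1 else 0

/-- `C'_{k,k+2}`: imaginary `k`-cycle on `0,…,k-1` with a pendant path `0,k,k+1`. -/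
noncomputable def CpTail (k : ℕ) : Matrix (Fin (k + 2)) (Fin (k + 2)) ℂ :=
  mkHerm (k + 2) fun a b =>
    if a + 1 = b ∧ b ≤ k - 1 then 1
    else if a = k - 1 ∧ b = 0 then Complex.I
    else if a = 0 ∧ b = k then 1
    else if a = k ∧ b = k + 1 then 1 else 0

/-- `D_{k,t}`: imaginary `k`-cycle with pendant vertices `k` at `0` and `k+1` at `t`. -/
noncomputable def Dkt (k t : ℕ) : Matrix (Fin (k + 2)) (Fin (k + 2)) ℂ :=
  mkHerm (k + 2) fun a b =>
    if a + 1 = b ∧ b ≤ k - 1 then 1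
    else if a = k - 1 ∧ b = 0 then Complex.I
    else if a = 0 ∧ b = k then 1
    else if a = t ∧ b = k + 1 then 1 else 0

/-- `C'_n`: the imaginary `n`-cycle on `ZMod n`. -/
noncomputable def CpCycle (n : ℕ) [NeZero n] : Matrix (ZMod n) (ZMod n) ℂ :=
  Matrix.of fun j l =>
    (if l = j + 1 then (if j = -1 then Complex.I else 1) else 0)
    + (if j = l + 1 then (if l = -1 then -Complex.I else 1) else 0)

/-- `C_n`: the undirected `n`-cycle. -/
noncomputable def Cund (n : ℕ) : Matrix (Fin n) (Fin n) ℂ :=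
  mkHerm n fun a b => if a + 1 = b ∨ (a = n - 1 ∧ b = 0) then 1 else 0

/-- `C''_n`: the negative `n`-cycle. -/
noncomputable def Cneg (n : ℕ) : Matrix (Fin n) (Fin n) ℂ :=
  mkHerm n fun a b =>
    if a + 1 = b ∧ b ≤ n - 2 then 1
    else if a = n - 2 ∧ b = n - 1 then Complex.I
    else if a = n - 1 ∧ b = 0 then Complex.I else 0

/-- `G''_{n-2,n/2}`: negative `(n-2)`-cycle with pendant edges at `v₁` and `v_{n/2}`. -/
noncomputable def Gpp (n : ℕ) : Matrix (Fin n) (Fin n) ℂ :=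
  mkHerm n fun a b =>
    if a + 1 = b ∧ b ≤ n - 4 then 1
    else if a = n - 4 ∧ b = n - 3 then Complex.I
    else if a = n - 3 ∧ b = 0 then Complex.I
    else if a = 0 ∧ b = n - 2 then 1
    else if a = n / 2 - 1 ∧ b = n - 1 then 1 else 0

/-- `U''_{k,m}`: negative `6`-cycle with pendant paths of `k` vertices at `v₁`
and `m` vertices at `v₄`. -/
noncomputable def Upp (k m : ℕ) : Matrix (Fin (6 + k + m)) (Fin (6 + k + m)) ℂ :=
  mkHerm (6 + k + m) fun a b =>
    if a + 1 = b ∧ b ≤ 4 then 1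
    else if a = 4 ∧ b = 5 then Complex.I
    else if a = 5 ∧ b = 0 then Complex.I
    else if a = 0 ∧ b = 6 ∧ 1 ≤ k then 1
    else if 6 ≤ a ∧ a + 1 = b ∧ b ≤ 5 + k then 1
    else if a = 3 ∧ b = 6 + k ∧ 1 ≤ m then 1
    else if 6 + k ≤ a ∧ a + 1 = b ∧ b ≤ 5 + k + m then 1 else 0

/-- `G''_{8,4}`: negative `8`-cycle with pendant edges at `v₁` and `v₄`. -/
noncomputable def Gpp84 : Matrix (Fin 10) (Fin 10) ℂ :=
  mkHerm 10 fun a b =>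
    if a + 1 = b ∧ b ≤ 6 then 1
    else if a = 6 ∧ b = 7 then Complex.I
    else if a = 7 ∧ b = 0 then Complex.I
    else if (a = 0 ∧ b = 8) ∨ (a = 3 ∧ b = 9) then 1 else 0

/-- `G''_{10,5}`: negative `10`-cycle with pendant edges at `v₁` and `v₅`. -/
noncomputable def Gpp105 : Matrix (Fin 12) (Fin 12) ℂ :=
  mkHerm 12 fun a b =>
    if a + 1 = b ∧ b ≤ 8 then 1
    else if a = 8 ∧ b = 9 then Complex.I
    else if a = 9 ∧ b = 0 then Complex.I
    else if (a = 0 ∧ b = 10) ∨ (a = 4 ∧ b = 11) then 1 else 0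

/-- `U''_6`: negative `6`-cycle with a pendant path of 2 vertices at `v₁`
and pendant edges at `v₃`, `v₅`. -/
noncomputable def Upp6 : Matrix (Fin 10) (Fin 10) ℂ :=
  mkHerm 10 fun a b =>
    if a + 1 = b ∧ b ≤ 4 then 1
    else if a = 4 ∧ b = 5 then Complex.I
    else if a = 5 ∧ b = 0 then Complex.I
    else if (a = 0 ∧ b = 6) ∨ (a = 6 ∧ b = 7) ∨ (a = 2 ∧ b = 8) ∨ (a = 4 ∧ b = 9) then 1 else 0

/-- `U''_8`: negative `8`-cycle with pendant paths of 2 vertices at `v₁` and `v₅`. -/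
noncomputable def Upp8 : Matrix (Fin 12) (Fin 12) ℂ :=
  mkHerm 12 fun a b =>
    if a + 1 = b ∧ b ≤ 6 then 1
    else if a = 6 ∧ b = 7 then Complex.I
    else if a = 7 ∧ b = 0 then Complex.I
    else if (a = 0 ∧ b = 8) ∨ (a = 8 ∧ b = 9) ∨ (a = 4 ∧ b = 10) ∨ (a = 10 ∧ b = 11) then 1
    else 0

/-- Two mixed graphs are switching isomorphic. -/
def IsSwitchIso {V₁ V₂ : Type*} (H₁ : Matrix V₁ V₁ ℂ) (H₂ : Matrix V₂ V₂ ℂ) : Prop :=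
  ∃ (σ : V₁ ≃ V₂) (d : V₁ → ℂ),
    (∀ v, d v = 1 ∨ d v = -1 ∨ d v = Complex.I ∨ d v = -Complex.I) ∧
    ((∀ u v, H₂ (σ u) (σ v) = (d u)⁻¹ * H₁ u v * d v) ∨
     (∀ u v, H₂ (σ u) (σ v) = (d u)⁻¹ * star (H₁ u v) * d v))

/-- `M` is switching isomorphic to an induced subgraph (principal submatrix) of `H`. -/
def IsSwitchSub {V U : Type*} (M : Matrix V V ℂ) (H : Matrix U U ℂ) : Prop :=
  ∃ f : V → U, Function.Injective f ∧ IsSwitchIso M (H.submatrix f f)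

/-- `x` is the largest positive real root of `p`. -/
def IsMaxPosRoot (p : Polynomial ℝ) (x : ℝ) : Prop :=
  0 < x ∧ p.eval x = 0 ∧ ∀ y : ℝ, 0 < y → p.eval y = 0 → y ≤ x

/-- The mixed graph obtained from `H` by attaching a pendant path of `n` new
vertices at `v`. -/
noncomputable def attachPath {V : Type*} [DecidableEq V] (H : Matrix V V ℂ) (v : V) (n : ℕ) :
    Matrix (V ⊕ Fin n) (V ⊕ Fin n) ℂ :=
  Matrix.of fun a b =>
    match a, b with
    | Sum.inl u, Sum.inl w => H u w
    | Sum.inl u, Sum.inr i => if u = v ∧ (i : ℕ) = 0 then 1 else 0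
    | Sum.inr i, Sum.inl u => if u = v ∧ (i : ℕ) = 0 then 1 else 0
    | Sum.inr i, Sum.inr j => if (i : ℕ) + 1 = (j : ℕ) ∨ (j : ℕ) + 1 = (i : ℕ) then 1 else 0

/-!
The spectral radii of a convergent sequence are bounded, say by `C`. For a Hermitian adjacency
matrix, `deg v = ‖H eᵥ‖² ≤ ‖H‖² = ρ(H)²`, so every degree is at most `C²`, and the Moore bound
shows that a connected graph of diameter at most `D` has at most `(C² + 1) ^ D` vertices. There are
only finitely many mixed graphs of bounded order, hence finitely many possible spectral radii; as
the `ρ(H_k)` are pairwise distinct, only finitely many `k` can have diameter at most `D`.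
-/

section SpectralRadius
variable {V : Type*} [Fintype V] [DecidableEq V]

theorem norm_le_specRad {H : Matrix V V ℂ} {z : ℂ} (hz : z ∈ spectrum ℂ H) : ‖z‖ ≤ specRad H :=
  le_csSup ((Matrix.finite_spectrum H).image _).bddAbove ⟨z, hz, rfl⟩

theorem specRad_nonneg (H : Matrix V V ℂ) : 0 ≤ specRad H :=
  Real.sSup_nonneg <| by rintro _ ⟨z, -, rfl⟩; exact norm_nonneg z

open scoped Matrix.Norms.L2Operator in
theorem Matrix.IsHermitian.l2_opNorm_le_specRad {H : Matrix V V ℂ} (hH : H.IsHermitian) :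
    ‖H‖ ≤ specRad H := by
  have hρ : spectralRadius ℂ H ≤ ENNReal.ofReal (specRad H) :=
    iSup₂_le fun z hz => by
      rw [← ENNReal.ofReal_coe_nnreal, coe_nnnorm]
      exact ENNReal.ofReal_le_ofReal (norm_le_specRad hz)
  rwa [hH.isSelfAdjoint.spectralRadius_eq_nnnorm, ← ENNReal.ofReal_coe_nnreal, coe_nnnorm,
    ENNReal.ofReal_le_ofReal_iff (specRad_nonneg H)] at hρ

end SpectralRadius

theorem dist_le_gdiam {V : Type*} [Fintype V] (G : SimpleGraph V) (u v : V) :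
    G.dist u v ≤ gdiam G :=
  Finset.le_sup (f := fun p : V × V => G.dist p.1 p.2) (Finset.mem_univ (u, v))

namespace SimpleGraph

open Finset
variable {V : Type*} [Fintype V] [DecidableEq V] {G : SimpleGraph V} [DecidableRel G.Adj]

theorem filter_dist_le_succ_subset (v : V) (r : ℕ) :
    ({u | G.dist v u ≤ r + 1} : Finset V) ⊆
      ({u | G.dist v u ≤ r} : Finset V).biUnion fun w => insert w (G.neighborFinset w) := by
  intro u hu
  simp only [mem_filter, mem_univ, true_and] at hu
  simp only [mem_biUnion, mem_filter, mem_univ, true_and, mem_insert, mem_neighborFinset]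
  by_cases hr : G.dist v u ≤ r
  · exact ⟨u, hr, Or.inl rfl⟩
  obtain ⟨p, hp⟩ := exists_walk_of_dist_ne_zero (G := G) (u := u) (v := v)
    (by rw [dist_comm]; omega)
  cases p with
  | nil => simp at hr
  | @cons _ w _ huw q =>
    refine ⟨w, ?_, Or.inr huw.symm⟩
    rw [Walk.length_cons, dist_comm] at hp
    rw [dist_comm]
    exact (dist_le q).trans (by omega)

theorem card_filter_dist_le_le_pow (hc : G.Connected) {Δ : ℕ} (hdeg : ∀ w, G.degree w ≤ Δ)
    (v : V) (r : ℕ) : #({u | G.dist v u ≤ r} : Finset V) ≤ (Δ + 1) ^ r := by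
  induction r with
  | zero =>
    -- `G.dist v u = 0` also holds for unreachable `u`; connectedness makes this ball `{v}`.
    simp [hc.dist_eq_zero_iff, card_le_one]
  | succ r ih =>
    calc _ ≤ _ := card_le_card (filter_dist_le_succ_subset v r)
      _ ≤ ∑ w ∈ ({u | G.dist v u ≤ r} : Finset V), (Δ + 1) :=
        card_biUnion_le.trans <| sum_le_sum fun w _ =>
          (card_insert_le _ _).trans (by rw [card_neighborFinset_eq_degree]; grind)
      _ ≤ (Δ + 1) ^ (r + 1) := by
        rw [sum_const, smul_eq_mul, pow_succ]
        exact Nat.mul_le_mul_right _ ih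

theorem card_le_pow_of_degree_le_of_dist_le (hc : G.Connected) {Δ D : ℕ}
    (hdeg : ∀ w, G.degree w ≤ Δ) (hD : ∀ u v, G.dist u v ≤ D) :
    Fintype.card V ≤ (Δ + 1) ^ D := by
  obtain ⟨v⟩ := hc.nonempty
  calc Fintype.card V = #({u | G.dist v u ≤ D} : Finset V) := by
        rw [filter_true_of_mem fun u _ => hD v u, card_univ]
    _ ≤ _ := card_filter_dist_le_le_pow hc hdeg v D

end SimpleGraph

namespace IsMixedAdj
variable {V : Type*} {H : Matrix V V ℂ}

theorem isHermitian (h : IsMixedAdj H) : H.IsHermitian :=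
  Matrix.IsHermitian.ext fun u v => (h.2.2 u v).symm

theorem apply_ne_zero_comm (h : IsMixedAdj H) {u v : V} : H u v ≠ 0 ↔ H v u ≠ 0 := by
  rw [h.2.2 u v, star_ne_zero]

theorem underGraph_adj (h : IsMixedAdj H) {u v : V} : (underGraph H).Adj u v ↔ H u v ≠ 0 := by
  rw [underGraph, SimpleGraph.fromRel_adj, h.apply_ne_zero_comm, or_self, and_iff_right_iff_imp]
  rintro hvu rfl
  exact hvu (h.1 u)

theorem norm_apply_sq (h : IsMixedAdj H) (u v : V) :
    ‖H u v‖ ^ 2 = if H u v = 0 then 0 else 1 := by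
  rcases h.2.1 u v with h0 | h0 | h0 | h0 <;> simp [h0]

variable [Fintype V] [DecidableEq V]

open scoped Matrix.Norms.L2Operator in
theorem degree_le_l2_opNorm_sq [DecidableRel (underGraph H).Adj] (h : IsMixedAdj H) (v : V) :
    ((underGraph H).degree v : ℝ) ≤ ‖H‖ ^ 2 := by
  have hdeg : ((underGraph H).degree v : ℝ) = ∑ u, ‖H u v‖ ^ 2 := by
    simp only [h.norm_apply_sq, Finset.sum_ite, Finset.sum_const_zero, Finset.sum_const, zero_add,
      nsmul_eq_mul, mul_one, ← SimpleGraph.card_neighborFinset_eq_degree,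
      SimpleGraph.neighborFinset_eq_filter, h.underGraph_adj, h.apply_ne_zero_comm (v := v)]
  have hcol := H.l2_opNorm_mulVec (EuclideanSpace.single v 1)
  simp only [PiLp.norm_single, norm_one, mul_one, EuclideanSpace.norm_eq, EuclideanSpace.equiv,
    PiLp.ofLp_single, Matrix.mulVec_single_one, PiLp.coe_symm_continuousLinearEquiv,
    Matrix.col_apply] at hcol
  rw [hdeg, ← Real.sqrt_le_left (norm_nonneg H)]
  exact hcol

open scoped Matrix.Norms.L2Operator in
theorem degree_le_specRad_sq [DecidableRel (underGraph H).Adj] (h : IsMixedAdj H) (v : V) :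
    ((underGraph H).degree v : ℝ) ≤ specRad H ^ 2 :=
  (h.degree_le_l2_opNorm_sq v).trans <|
    pow_le_pow_left₀ (norm_nonneg H) h.isHermitian.l2_opNorm_le_specRad 2

theorem card_le_of_gdiam_le [DecidableRel (underGraph H).Adj] (h : IsMixedAdj H)
    (hc : (underGraph H).Connected) {C : ℝ} (hC : specRad H ≤ C) {D : ℕ}
    (hD : gdiam (underGraph H) ≤ D) : Fintype.card V ≤ (⌈C ^ 2⌉₊ + 1) ^ D := by
  refine SimpleGraph.card_le_pow_of_degree_le_of_dist_le hc (fun v => ?_)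
    fun u v => (dist_le_gdiam _ u v).trans hD
  exact_mod_cast (h.degree_le_specRad_sq v).trans <|
    (pow_le_pow_left₀ (specRad_nonneg H) hC 2).trans (Nat.le_ceil _)

end IsMixedAdj

theorem finite_setOf_isMixedAdj (V : Type*) [Finite V] :
    {A : Matrix V V ℂ | IsMixedAdj A}.Finite := by
  refine (Set.Finite.pi fun _ => Set.Finite.pi fun _ =>
    Set.toFinite {0, 1, Complex.I, -Complex.I}).subset fun A hA => ?_
  simpa [Set.mem_pi] using hA.2.1

theorem finite_specRad_isMixedAdj (M : ℕ) :
    (⋃ m ∈ Set.Iic M, specRad '' {A : Matrix (Fin m) (Fin m) ℂ | IsMixedAdj A}).Finite :=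
  (Set.finite_Iic M).biUnion fun m _ => (finite_setOf_isMixedAdj (Fin m)).image _

theorem stmt1_general (n : ℕ → ℕ)
    (H : (k : ℕ) → Matrix (Fin (n k)) (Fin (n k)) ℂ)
    (hmixed : ∀ k, IsMixedAdj (H k))
    (hconn : ∀ k, (underGraph (H k)).Connected)
    (hdist : ∀ i j, i ≠ j → specRad (H i) ≠ specRad (H j))
    (γ : ℝ) (hlim : Tendsto (fun k => specRad (H k)) atTop (nhds γ)) :
    ∀ D : ℕ, ∃ N : ℕ, ∀ k, N ≤ k → D < gdiam (underGraph (H k)) := by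
  classical
  intro D
  obtain ⟨C, hC⟩ := hlim.bddAbove_range
  have hsmall : {k | gdiam (underGraph (H k)) ≤ D}.Finite := by
    refine Set.Finite.of_finite_image (f := fun k => specRad (H k))
      ((finite_specRad_isMixedAdj ((⌈C ^ 2⌉₊ + 1) ^ D)).subset ?_)
      fun i _ j _ hij => by_contra fun hne => hdist i j hne hij
    rintro _ ⟨k, hk, rfl⟩
    refine Set.mem_biUnion (x := n k) ?_ ⟨H k, hmixed k, rfl⟩
    simpa using (hmixed k).card_le_of_gdiam_le (hconn k) (hC (Set.mem_range_self k)) hk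
  simpa [Nat.cofinite_eq_atTop] using hsmall.eventually_cofinite_notMem

/-- diameters tend to infinity. -/
theorem stmt1 (n : ℕ → ℕ) (hn : ∀ k, 1 ≤ n k)
    (H : (k : ℕ) → Matrix (Fin (n k)) (Fin (n k)) ℂ)
    (hmixed : ∀ k, IsMixedAdj (H k))
    (hconn : ∀ k, (underGraph (H k)).Connected)
    (hdist : ∀ i j, i ≠ j → specRad (H i) ≠ specRad (H j))
    (γ : ℝ) (hlim : Tendsto (fun k => specRad (H k)) atTop (nhds γ)) :
    ∀ D : ℕ, ∃ N : ℕ, ∀ k, N ≤ k → D < gdiam (underGraph (H k)) :=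
  stmt1_general n H hmixed hconn hdist γ hlim
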